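/- arXiv:1501.00906 — 3 statements merged into one kernel-verified Lean document; each statement's English description precedes it below -/
import Mathlib

section
/- Let k be a field of characteristic p > 0, R a commutative k-algebra, and d a k-linear derivation of R with d^{(p)} = d (p-fold composite). Define d_0 = id_R, d_1 = d, and recursively d_{n+1} = (1/(n+1))·(d ∘ d_n − n·d_n) for 1 ≤ n ≤ p − 2 (the scalar n+1 is invertible in k). Then (d_n)_{0 ≤ n < p} is a 1-truncated HS-derivation on R over k which is 𝔾_m[1]-iterative. -/
/-- `c i j n` is the coefficient of `X^i Y^j` in `(X + Y + XY)^n`. -/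
noncomputable def gmIterCoeff (i j n : ℕ) : ℕ :=
  MvPolynomial.coeff (Finsupp.single (0 : Fin 2) i + Finsupp.single (1 : Fin 2) j)
    ((MvPolynomial.X 0 + MvPolynomial.X 1 +
      MvPolynomial.X 0 * MvPolynomial.X 1 : MvPolynomial (Fin 2) ℕ) ^ n)

/-!
The sequence is `D n = (d choose n) = d (d - 1) ⋯ (d - n + 1) / n!`, i.e. the binomial
polynomial `X (X - 1) ⋯ (X - n + 1) / n!` evaluated at `d`. The Leibniz rule comes from
`(d - i - j) (u v) = ((d - i) u) v + u ((d - j) v)`, which makes the falling factorials of `d`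
satisfy the binomial Leibniz rule. For iterativity, `d ^ p = d` means that `d` is killed by
`X ^ p - X`, hence by every polynomial vanishing on `𝔽_p ⊆ k`; so it suffices to check the
polynomial identity `(X choose i) (X choose j) = ∑ c(i,j,n) (X choose n)` at `m < p`, where it is
the comparison of the coefficients of `X^i Y^j` in `((1 + X) (1 + Y))^m = (1 + (X + Y + XY))^m`.
-/

open Finset
open scoped Nat

theorem add_one_pow_eq_sum_nsmul {S : Type*} [CommSemiring S] (q : S) (m : ℕ) :
    (q + 1) ^ m = ∑ s ∈ range (m + 1), m.choose s • q ^ s := by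
  simp [add_pow, nsmul_eq_mul, mul_comm]

theorem Nat.sum_range_succ_ite_eq_choose (m i : ℕ) :
    ∑ s ∈ range (m + 1), (if s = i then m.choose s else 0) = m.choose i := by
  rw [sum_ite_eq']
  split_ifs with h
  · rfl
  · exact (Nat.choose_eq_zero_of_lt (by simpa [Nat.lt_succ_iff] using h)).symm

namespace MvPolynomial

theorem coeff_single_add_single_X_pow_mul_X_pow {S : Type*} [CommSemiring S] (i j s t : ℕ) :
    coeff (Finsupp.single (0 : Fin 2) i + Finsupp.single 1 j)
      ((X 0 : MvPolynomial (Fin 2) S) ^ s * X 1 ^ t) = if s = i ∧ t = j then 1 else 0 := by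
  rw [X_pow_eq_monomial, X_pow_eq_monomial, monomial_mul, coeff_monomial, one_mul]
  simp [Finsupp.ext_iff, Fin.forall_fin_two]

end MvPolynomial

open MvPolynomial in
theorem Nat.choose_mul_choose_eq_sum_gmIterCoeff (i j : ℕ) {m N : ℕ} (hm : m < N) :
    m.choose i * m.choose j = ∑ n ∈ range N, gmIterCoeff i j n * m.choose n := by
  have key : ((X 0 + 1) ^ m * (X 1 + 1) ^ m : MvPolynomial (Fin 2) ℕ) =
      (X 0 + X 1 + X 0 * X 1 + 1) ^ m := by
    rw [← mul_pow]; ring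
  have hcoeff := congrArg (coeff (Finsupp.single (0 : Fin 2) i + Finsupp.single 1 j)) key
  simp only [add_one_pow_eq_sum_nsmul, sum_mul_sum, smul_mul_smul_comm, coeff_sum, coeff_smul,
    coeff_single_add_single_X_pow_mul_X_pow, smul_eq_mul, mul_ite, mul_one, mul_zero] at hcoeff
  simp only [← ite_zero_mul_ite_zero, ← sum_mul_sum, Nat.sum_range_succ_ite_eq_choose] at hcoeff
  rw [hcoeff]
  refine sum_subset_zero_on_sdiff (range_subset_range.2 hm) (fun n hn => ?_)
    fun n _ => mul_comm _ _
  rw [mem_sdiff, mem_range, mem_range] at hn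
  rw [Nat.choose_eq_zero_of_lt (by omega), mul_zero]

open Polynomial

section FallingFactorial

variable {k M : Type*} [CommRing k] [AddCommGroup M] [Module k M]

theorem aeval_descPochhammer_succ_apply (a : Module.End k M) (n : ℕ) (z : M) :
    aeval a (descPochhammer k (n + 1)) z =
      a (aeval a (descPochhammer k n) z) - (n : k) • aeval a (descPochhammer k n) z := by
  rw [descPochhammer_succ_right, mul_comm, map_mul, Module.End.mul_apply]
  simp [← Nat.cast_smul_eq_nsmul k]

namespace Derivation

variable {R : Type*} [CommRing R] [Algebra k R] (d : Derivation k R R)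

theorem leibniz_sub_smul (a b : k) (u v : R) :
    d (u * v) - (a + b) • (u * v) = (d u - a • u) * v + u * (d v - b • v) := by
  rw [d.leibniz, smul_eq_mul, smul_eq_mul, add_smul, sub_mul, mul_sub, smul_mul_assoc,
    mul_smul_comm]
  ring

theorem aeval_descPochhammer_apply_mul (n : ℕ) (x y : R) :
    aeval (d : Module.End k R) (descPochhammer k n) (x * y) =
      ∑ ij ∈ antidiagonal n, n.choose ij.1 •
        (aeval (d : Module.End k R) (descPochhammer k ij.1) x *
          aeval (d : Module.End k R) (descPochhammer k ij.2) y) := by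
  let P (n : ℕ) : R → R := aeval (d : Module.End k R) (descPochhammer k n)
  have hP (n : ℕ) (z : R) : P (n + 1) z = d (P n z) - (n : k) • P n z :=
    aeval_descPochhammer_succ_apply _ n z
  change P n (x * y) = ∑ ij ∈ antidiagonal n, n.choose ij.1 • (P ij.1 x * P ij.2 y)
  induction n with
  | zero => simp [P]
  | succ n ih =>
    rw [sum_antidiagonal_choose_succ_nsmul (fun i j => P i x * P j y) n, hP, ih, map_sum,
      smul_sum, ← sum_sub_distrib, ← sum_add_distrib]
    refine sum_congr rfl fun ⟨i, j⟩ hij => ?_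
    rw [HasAntidiagonal.mem_antidiagonal] at hij
    subst hij
    rw [Nat.choose_symm_add, ← smul_add, map_nsmul, smul_comm, ← smul_sub, Nat.cast_add,
      d.leibniz_sub_smul, hP, hP, add_comm (_ * P j y)]

theorem aeval_apply_algebraMap_of_X_dvd {f : k[X]} (hf : X ∣ f) (c : k) :
    aeval (d : Module.End k R) f (algebraMap k R c) = 0 := by
  obtain ⟨g, rfl⟩ := hf
  rw [mul_comm, map_mul, Module.End.mul_apply, aeval_X, coeFn_coe, d.map_algebraMap, map_zero]

end Derivation

end FallingFactorial

section BinomialPoly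

variable (k : Type*) [Field k]

/-- `X choose n`; when `n ! = 0` in `k` the factor `(n ! : k)⁻¹` is the junk value `0`. -/
noncomputable def binomialPoly (n : ℕ) : k[X] := (n ! : k)⁻¹ • descPochhammer k n

variable {k}

theorem binomialPoly_eval_natCast {n : ℕ} (hn : (n ! : k) ≠ 0) (m : ℕ) :
    (binomialPoly k n).eval (m : k) = m.choose n := by
  rw [binomialPoly, eval_smul, descPochhammer_eval_eq_descFactorial,
    Nat.descFactorial_eq_factorial_mul_choose, Nat.cast_mul, smul_eq_mul,
    inv_mul_cancel_left₀ hn]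

theorem X_dvd_binomialPoly {n : ℕ} (hn : 0 < n) : X ∣ binomialPoly k n := by
  obtain ⟨m, rfl⟩ := Nat.exists_eq_add_of_lt hn
  rw [binomialPoly, zero_add, descPochhammer_succ_left, smul_eq_C_mul, mul_left_comm]
  exact dvd_mul_right _ _

variable {M : Type*} [AddCommGroup M] [Module k M]

theorem aeval_binomialPoly_succ_apply (a : Module.End k M) (n : ℕ) (z : M) :
    aeval a (binomialPoly k (n + 1)) z =
      ((n : k) + 1)⁻¹ •
        (a (aeval a (binomialPoly k n) z) - (n : k) • aeval a (binomialPoly k n) z) := by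
  simp only [binomialPoly, map_smul, LinearMap.smul_apply, aeval_descPochhammer_succ_apply,
    Nat.factorial_succ, Nat.cast_mul, Nat.cast_succ, mul_inv, mul_smul, smul_sub,
    smul_comm (n : k)]

theorem eq_aeval_binomialPoly_of_recursion {D : ℕ → M → M} (a : Module.End k M) {p : ℕ}
    (hD0 : D 0 = id) (hD1 : D 1 = a)
    (hrec : ∀ n, 1 ≤ n → n ≤ p - 2 → ∀ x,
      D (n + 1) x = ((n : k) + 1)⁻¹ • (a (D n x) - (n : k) • D n x)) :
    ∀ n < p, D n = aeval a (binomialPoly k n) := by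
  intro n hn
  induction n with
  | zero => simp [hD0, binomialPoly, Module.End.one_eq_id]
  | succ n ih =>
    rcases Nat.eq_zero_or_pos n with rfl | hpos
    · simp [hD1, binomialPoly]
    · funext x
      rw [hrec n hpos (by omega), ih (by omega), aeval_binomialPoly_succ_apply]

theorem Derivation.aeval_binomialPoly_apply_mul {R : Type*} [CommRing R] [Algebra k R]
    (d : Derivation k R R) {n : ℕ} (hn : (n ! : k) ≠ 0) (x y : R) :
    aeval (d : Module.End k R) (binomialPoly k n) (x * y) =
      ∑ ij ∈ antidiagonal n, aeval (d : Module.End k R) (binomialPoly k ij.1) x *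
        aeval (d : Module.End k R) (binomialPoly k ij.2) y := by
  simp only [binomialPoly, AlgHom.map_smul_of_tower, LinearMap.smul_apply,
    d.aeval_descPochhammer_apply_mul, smul_sum]
  refine sum_congr rfl fun ⟨i, j⟩ hij => ?_
  rw [HasAntidiagonal.mem_antidiagonal] at hij
  subst hij
  have hfac : ((i + j).choose j : k) * i ! * j ! = (i + j) ! := by
    rw [← Nat.cast_mul, ← Nat.cast_mul, Nat.add_choose_mul_factorial_mul_factorial]
  rw [← hfac] at hn
  have hc : ((i + j).choose j : k) ≠ 0 := fun h => hn (by rw [h, zero_mul, zero_mul])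
  have hi : (i ! : k) ≠ 0 := fun h => hn (by rw [h, mul_zero, zero_mul])
  have hj : (j ! : k) ≠ 0 := fun h => hn (by rw [h, mul_zero])
  rw [← hfac, Nat.choose_symm_add, ← Nat.cast_smul_eq_nsmul k, smul_smul, smul_mul_smul_comm]
  congr 1
  field_simp

end BinomialPoly

section CharP

variable {k : Type*} [Field k] {p : ℕ} [Fact p.Prime] [CharP k p]

theorem Nat.cast_factorial_ne_zero_of_lt {n : ℕ} (hn : n < p) : (n ! : k) ≠ 0 := by
  rw [Ne, CharP.cast_eq_zero_iff k p, (Fact.out : p.Prime).dvd_factorial]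
  omega

theorem X_pow_sub_X_dvd_of_eval_natCast_eq_zero {f : k[X]}
    (hf : ∀ m < p, f.eval (m : k) = 0) : X ^ p - X ∣ f := by
  have hp : 1 < p := (Fact.out : p.Prime).one_lt
  have hdeg : (X ^ p - X : k[X]).natDegree = p := FiniteField.X_pow_card_sub_X_natDegree_eq k hp
  have hmonic : (X ^ p - X : k[X]).Monic :=
    monic_X_pow_sub (by rw [degree_X]; exact_mod_cast hp)
  rw [← modByMonic_eq_zero_iff_dvd hmonic]
  refine eq_zero_of_natDegree_lt_card_of_eval_eq_zero _
    (f := fun m : Fin p => ((m : ℕ) : k)) ?_ (fun m => ?_) ?_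
  · intro m m' h
    exact Fin.ext (CharP.natCast_injOn_Iio k p m.isLt m'.isLt h)
  · have hroot : (X ^ p - X : k[X]).eval ((m : ℕ) : k) = 0 := by
      rw [eval_sub, eval_pow, eval_X, ← frobenius_def, map_natCast, sub_self]
    have hdiv := congrArg (eval ((m : ℕ) : k)) (modByMonic_add_div f (X ^ p - X))
    rwa [eval_add, eval_mul, hroot, zero_mul, add_zero, hf m m.isLt] at hdiv
  · rw [Fintype.card_fin]
    calc (f %ₘ (X ^ p - X)).natDegree < (X ^ p - X : k[X]).natDegree :=
          natDegree_modByMonic_lt f hmonic fun h => by simp [h] at hdeg; omega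
      _ = p := hdeg

theorem aeval_eq_zero_of_pow_eq_self {A : Type*} [Ring A] [Algebra k A] {a : A}
    (ha : a ^ p = a) {f : k[X]} (hf : ∀ m < p, f.eval (m : k) = 0) : aeval a f = 0 := by
  obtain ⟨g, rfl⟩ := X_pow_sub_X_dvd_of_eval_natCast_eq_zero hf
  rw [map_mul, map_sub, map_pow, aeval_X, ha, sub_self, zero_mul]

theorem aeval_binomialPoly_mul_aeval_binomialPoly {A : Type*} [Ring A] [Algebra k A] {a : A}
    (ha : a ^ p = a) {i j : ℕ} (hi : i < p) (hj : j < p) :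
    aeval a (binomialPoly k i) * aeval a (binomialPoly k j) =
      ∑ n ∈ range p, gmIterCoeff i j n • aeval a (binomialPoly k n) := by
  have hfac (n : ℕ) (hn : n < p) : (n ! : k) ≠ 0 := Nat.cast_factorial_ne_zero_of_lt hn
  simp_rw [← map_mul, ← map_nsmul, ← map_sum]
  rw [← sub_eq_zero, ← map_sub]
  refine aeval_eq_zero_of_pow_eq_self ha fun m hm => ?_
  rw [eval_sub, eval_mul, eval_finsetSum, binomialPoly_eval_natCast (hfac i hi),
    binomialPoly_eval_natCast (hfac j hj), sub_eq_zero]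
  rw [sum_congr rfl fun n hn => by
    rw [eval_smul, binomialPoly_eval_natCast (hfac n (mem_range.1 hn)), nsmul_eq_mul]]
  have hnat := congrArg (Nat.cast (R := k)) (Nat.choose_mul_choose_eq_sum_gmIterCoeff i j hm)
  push_cast at hnat
  exact hnat

end CharP

/-- Let `d` be a `k`-linear derivation of a commutative `k`-algebra `R`
(`char k = p > 0`) with `d^{(p)} = d`. The sequence defined by `d_0 = id`, `d_1 = d` and
`d_{n+1} = (1/(n+1))·(d ∘ d_n − n·d_n)` for `1 ≤ n ≤ p−2` is a `1`-truncated
HS-derivation on `R` over `k` which is `𝔾ₘ[1]`-iterative. -/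
theorem multiplicative_derivation_expands_to_gm_one_truncated
    (k : Type*) [Field k] (p : ℕ) [Fact p.Prime] [CharP k p]
    (R : Type*) [CommRing R] [Algebra k R]
    (d : Derivation k R R)
    (hdp : ∀ x, (⇑d)^[p] x = d x)
    (D : ℕ → R → R)
    (hD0 : D 0 = id)
    (hD1 : D 1 = ⇑d)
    (hrec : ∀ n, 1 ≤ n → n ≤ p - 2 → ∀ x,
      D (n + 1) x = ((n : k) + 1)⁻¹ • (d (D n x) - (n : k) • D n x)) :
    (∀ i, i < p → ∀ x y, D i (x + y) = D i x + D i y) ∧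
    (∀ i, i < p → ∀ x y,
      D i (x * y) = ∑ jl ∈ Finset.HasAntidiagonal.antidiagonal i, D jl.1 x * D jl.2 y) ∧
    (∀ c : k, ∀ i, 0 < i → i < p → D i (algebraMap k R c) = 0) ∧
    (∀ i j, i < p → j < p → ∀ x,
      D i (D j x) = ∑ n ∈ Finset.range p, gmIterCoeff i j n • D n x) := by
  set a : Module.End k R := d.toLinearMap
  have hap : a ^ p = a := LinearMap.ext fun x => by rw [Module.End.pow_apply]; exact hdp x
  have hD : ∀ n < p, D n = aeval a (binomialPoly k n) :=
    eq_aeval_binomialPoly_of_recursion a hD0 hD1 hrec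
  refine ⟨fun i hi x y => by rw [hD i hi, map_add], fun i hi x y => ?_,
    fun c i hi₀ hi => ?_, fun i j hi hj x => ?_⟩
  · rw [hD i hi, d.aeval_binomialPoly_apply_mul (Nat.cast_factorial_ne_zero_of_lt hi)]
    refine sum_congr rfl fun jl hjl => ?_
    rw [HasAntidiagonal.mem_antidiagonal] at hjl
    rw [hD jl.1 (by omega), hD jl.2 (by omega)]
  · rw [hD i hi]
    exact d.aeval_apply_algebraMap_of_X_dvd (X_dvd_binomialPoly hi₀) c
  · rw [hD i hi, hD j hj, ← Module.End.mul_apply,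
      aeval_binomialPoly_mul_aeval_binomialPoly hap hi hj, LinearMap.sum_apply]
    refine sum_congr rfl fun n hn => ?_
    rw [hD n (mem_range.1 hn), LinearMap.smul_apply]
end

section
/- Let k be a field of characteristic p > 0, R a commutative k-algebra, and d a k-linear derivation of R. Then d^{(p)} = 0 (p-fold composite) if and only if there exists a 1-truncated HS-derivation (d_n)_{0 ≤ n < p} on R over k which is 𝔾_a[1]-iterative and satisfies d_1 = d; moreover, when d^{(p)} = 0 one may take d_n = (1/n!)·d^{(n)} for 0 ≤ n < p. -/
/-!
For `n < p` the factorial `n!` is a unit of `k`, so `d_n = d^n / n!` makes sense. The Leibniz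
rule for `d^n` together with `(i + j).choose i * i! * j! = (i + j)!` turns into the Hasse–Schmidt
rule and the iterativity `d_i d_j = (i + j).choose i • d_(i+j)`, while `d^p = 0` kills
`d_i d_j` for `i + j ≥ p`. Conversely, iterativity forces `d^n = n! • d_n` for `n < p`, hence
`d^p = d (d^(p-1)) = (p-1)! • d_1 (d_(p-1)) = 0`.
-/

open Finset Function Nat

theorem Nat.inv_factorial_mul_inv_factorial {K : Type*} [Field K] {a b : ℕ}
    (h : ((a + b)! : K) ≠ 0) :
    (a ! : K)⁻¹ * (b ! : K)⁻¹ = (a + b).choose a * ((a + b)! : K)⁻¹ := by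
  have hfac : ((a + b).choose a : K) * a ! * b ! = (a + b)! := by
    rw [choose_symm_add]; exact_mod_cast congrArg _ (add_choose_mul_factorial_mul_factorial a b)
  rw [← hfac] at h ⊢
  obtain ⟨⟨hc, ha⟩, hb⟩ := mul_ne_zero_iff.mp h |>.imp_left mul_ne_zero_iff.mp
  field_simp

namespace Derivation

section Semiring

variable {k R : Type*} [CommSemiring k] [CommSemiring R] [Algebra k R] (d : Derivation k R R)

theorem iterate_leibniz (n : ℕ) (x y : R) :
    d^[n] (x * y) = ∑ ij ∈ antidiagonal n, n.choose ij.1 • (d^[ij.1] x * d^[ij.2] y) := by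
  induction n with
  | zero => simp
  | succ n ih =>
    rw [sum_antidiagonal_choose_succ_nsmul (fun i j => d^[i] x * d^[j] y), iterate_succ_apply',
      ih, map_sum, add_comm, ← sum_add_distrib]
    refine sum_congr rfl fun ij hij => ?_
    rw [choose_symm_of_eq_add (mem_antidiagonal.mp hij).symm, map_nsmul, leibniz, ← nsmul_add]
    simp only [smul_eq_mul, iterate_succ_apply']
    ring_nf

theorem iterate_map_smul (n : ℕ) (c : k) (x : R) : d^[n] (c • x) = c • d^[n] x :=
  Function.Commute.iterate_left (fun x => d.map_smul c x) n x

theorem iterate_eq_zero_of_le {p : ℕ} (hd : ∀ x, d^[p] x = 0) {n : ℕ} (hn : p ≤ n) (x : R) :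
    d^[n] x = 0 := by
  rw [← Nat.sub_add_cancel hn, iterate_add_apply, hd, iterate_map_zero]

/-- `D` is a `𝔾ₐ[1]`-iterative `1`-truncated HS-derivation `(D n)_(n < p)` with `D 1 = d`; the
values `D n` for `n ≥ p` play no role. -/
def IsIterativeHSExpansion (p : ℕ) (D : ℕ → R → R) : Prop :=
  D 0 = id ∧
  (∀ i, i < p → ∀ x y, D i (x + y) = D i x + D i y) ∧
  (∀ i, i < p → ∀ x y,
    D i (x * y) = ∑ jl ∈ antidiagonal i, D jl.1 x * D jl.2 y) ∧
  (∀ c : k, ∀ i, 0 < i → i < p → D i (algebraMap k R c) = 0) ∧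
  (∀ i j, i + j < p → ∀ x, D i (D j x) = (i + j).choose i • D (i + j) x) ∧
  (∀ i j, i < p → j < p → p ≤ i + j → ∀ x, D i (D j x) = 0) ∧
  D 1 = ⇑d

section Expansion

variable {d} {p : ℕ} {D : ℕ → R → R}

theorem IsIterativeHSExpansion.iterate_eq_factorial_nsmul (hD : d.IsIterativeHSExpansion p D)
    {n : ℕ} (hn : n < p) (x : R) :
    d^[n] x = n ! • D n x := by
  obtain ⟨hD0, -, -, -, hiter, -, hD1⟩ := hD
  induction n generalizing x with
  | zero => simp [hD0]
  | succ n ih =>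
    rw [iterate_succ_apply', ih (by omega), map_nsmul, ← hD1, hiter 1 n (by omega),
      choose_one_right, smul_smul, add_comm 1 n, factorial_succ, mul_comm]

theorem IsIterativeHSExpansion.iterate_eq_zero (hD : d.IsIterativeHSExpansion p D) (hp : 1 < p)
    (x : R) : d^[p] x = 0 := by
  rw [← Nat.sub_add_cancel hp.le, iterate_succ_apply', hD.iterate_eq_factorial_nsmul (by omega)]
  obtain ⟨-, -, -, -, -, hzero, hD1⟩ := hD
  rw [map_nsmul, ← hD1, hzero 1 (p - 1) hp (by omega) (by omega), smul_zero]

end Expansion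

end Semiring

section DividedIterate

variable {k R : Type*} [Field k] [CommSemiring R] [Algebra k R] (d : Derivation k R R)

def divIterate (n : ℕ) (x : R) : R := (n ! : k)⁻¹ • d^[n] x

theorem divIterate_zero : d.divIterate 0 = id := by
  ext x; simp [divIterate]

theorem divIterate_one : d.divIterate 1 = d := by
  ext x; simp [divIterate]

theorem divIterate_add (n : ℕ) (x y : R) :
    d.divIterate n (x + y) = d.divIterate n x + d.divIterate n y := by
  simp [divIterate, smul_add]

theorem divIterate_algebraMap {n : ℕ} (hn : n ≠ 0) (c : k) :
    d.divIterate n (algebraMap k R c) = 0 := by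
  obtain ⟨n, rfl⟩ := exists_eq_succ_of_ne_zero hn
  simp [divIterate, iterate_succ_apply]

theorem divIterate_mul {n : ℕ} (hn : (n ! : k) ≠ 0) (x y : R) :
    d.divIterate n (x * y) =
      ∑ ij ∈ antidiagonal n, d.divIterate ij.1 x * d.divIterate ij.2 y := by
  rw [divIterate, iterate_leibniz, smul_sum]
  refine sum_congr rfl fun ij hij => ?_
  obtain rfl := mem_antidiagonal.mp hij
  rw [divIterate, divIterate, smul_mul_smul_comm, inv_factorial_mul_inv_factorial hn, mul_smul,
    Nat.cast_smul_eq_nsmul, smul_comm]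

theorem divIterate_divIterate {i j : ℕ} (h : ((i + j)! : k) ≠ 0) (x : R) :
    d.divIterate i (d.divIterate j x) = (i + j).choose i • d.divIterate (i + j) x := by
  rw [divIterate, divIterate, divIterate, iterate_map_smul, smul_smul, ← iterate_add_apply,
    inv_factorial_mul_inv_factorial h, mul_smul, Nat.cast_smul_eq_nsmul]

theorem divIterate_divIterate_eq_zero {p : ℕ} (hd : ∀ x, d^[p] x = 0) {i j : ℕ}
    (h : p ≤ i + j) (x : R) : d.divIterate i (d.divIterate j x) = 0 := by
  rw [divIterate, divIterate, iterate_map_smul, ← iterate_add_apply,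
    d.iterate_eq_zero_of_le hd h, smul_zero, smul_zero]

theorem isIterativeHSExpansion_divIterate (p : ℕ) [Fact p.Prime] [CharP k p]
    (hd : ∀ x, d^[p] x = 0) : d.IsIterativeHSExpansion p d.divIterate := by
  have hfac {n : ℕ} (hn : n < p) : (n ! : k) ≠ 0 :=
    ((IsUnit.natCast_factorial_iff_of_charP p).mpr hn).ne_zero
  exact ⟨d.divIterate_zero, fun i _ => d.divIterate_add i,
    fun i hi => d.divIterate_mul (hfac hi), fun c i hi _ => d.divIterate_algebraMap hi.ne' c,
    fun i j h => d.divIterate_divIterate (hfac h),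
    fun i j _ _ h => d.divIterate_divIterate_eq_zero hd h, d.divIterate_one⟩

end DividedIterate

end Derivation

/-- For a `k`-linear derivation `d` of a commutative `k`-algebra `R`
(`char k = p > 0`): `d^{(p)} = 0` iff `d` expands to a `𝔾ₐ[1]`-iterative `1`-truncated
HS-derivation on `R` over `k`; moreover when `d^{(p)} = 0` the family `d_n = d^{(n)}/n!`
is such an expansion. -/
theorem nilpotent_derivation_expands_to_ga_one_truncated
    (k : Type*) [Field k] (p : ℕ) [Fact p.Prime] [CharP k p]
    (R : Type*) [CommRing R] [Algebra k R]
    (d : Derivation k R R) :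
    ((∀ x, (⇑d)^[p] x = 0) ↔
      ∃ D : ℕ → R → R,
        D 0 = id ∧
        (∀ i, i < p → ∀ x y, D i (x + y) = D i x + D i y) ∧
        (∀ i, i < p → ∀ x y,
          D i (x * y) = ∑ jl ∈ Finset.HasAntidiagonal.antidiagonal i, D jl.1 x * D jl.2 y) ∧
        (∀ c : k, ∀ i, 0 < i → i < p → D i (algebraMap k R c) = 0) ∧
        (∀ i j, i + j < p → ∀ x, D i (D j x) = (i + j).choose i • D (i + j) x) ∧
        (∀ i j, i < p → j < p → p ≤ i + j → ∀ x, D i (D j x) = 0) ∧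
        D 1 = ⇑d) ∧
    ((∀ x, (⇑d)^[p] x = 0) →
      ∀ D : ℕ → R → R, (∀ n x, D n x = ((n.factorial : k))⁻¹ • (⇑d)^[n] x) →
        D 0 = id ∧
        (∀ i, i < p → ∀ x y, D i (x + y) = D i x + D i y) ∧
        (∀ i, i < p → ∀ x y,
          D i (x * y) = ∑ jl ∈ Finset.HasAntidiagonal.antidiagonal i, D jl.1 x * D jl.2 y) ∧
        (∀ c : k, ∀ i, 0 < i → i < p → D i (algebraMap k R c) = 0) ∧
        (∀ i j, i + j < p → ∀ x, D i (D j x) = (i + j).choose i • D (i + j) x) ∧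
        (∀ i j, i < p → j < p → p ≤ i + j → ∀ x, D i (D j x) = 0) ∧
        D 1 = ⇑d) := by
  have expansion (hd : ∀ x, d^[p] x = 0) (D : ℕ → R → R)
      (hD : ∀ n x, D n x = d.divIterate n x) : d.IsIterativeHSExpansion p D := by
    obtain rfl : D = d.divIterate := funext₂ hD
    exact d.isIterativeHSExpansion_divIterate p hd
  exact ⟨⟨fun hd => ⟨_, expansion hd _ fun _ _ => rfl⟩,
    fun ⟨_, hD⟩ => Derivation.IsIterativeHSExpansion.iterate_eq_zero hD
      (Fact.out : p.Prime).one_lt⟩, expansion⟩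
end

section
/- Let k be a field. Let e : k(X,Y) → k(X,Y)⟦U,V⟧ be the unique ring homomorphism extending the k-algebra map k[X,Y] → k[X,Y]⟦U,V⟧ given by X ↦ X + U, Y ↦ Y + V (it extends to the fraction field because e(q) has invertible constant term for every nonzero q ∈ k[X,Y]), and for i, j ∈ ℕ let D_{(i,j)} : k(X,Y) → k(X,Y) send r to the coefficient of U^i V^j in e(r). Then for all i, j, the map D_{(i,j)} sends the subring k[X/Y, 1/Y] into itself and the subring k[Y/X, 1/X] into itself. -/
/-!
Since `e` is a ring homomorphism, the elements of `k(X,Y)` all of whose Hasse derivatives lie in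
a subring `A ⊇ k` form a subring, so it suffices to check the two generators of a chart. With
`φ = 1 + V/Y`, which has constant term `1`, one has `e(1/Y) = (1/Y) φ⁻¹` and
`e(X/Y) = (X/Y + U/Y) φ⁻¹`; the inverse of a power series with coefficients in `A` and unit
constant term again has coefficients in `A`.
-/

theorem RingHom.apply_mem_of_mem_adjoin {R A B : Type*} [CommRing R] [Ring A] [Algebra R A]
    [Ring B] (f : A →+* B) {S : Subring B} {s : Set A}
    (halg : ∀ r, f (algebraMap R A r) ∈ S) (hs : ∀ x ∈ s, f x ∈ S)
    {x : A} (hx : x ∈ Algebra.adjoin R s) : f x ∈ S := by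
  rw [Algebra.mem_adjoin_iff] at hx
  exact (Subring.closure_le (t := S.comap f)).mpr
    (Set.union_subset (Set.range_subset_iff.mpr halg) hs) hx

namespace MvPowerSeries

variable {σ K : Type*}

theorem mem_range_map_subtype_iff [CommRing K] {A : Subring K} {φ : MvPowerSeries σ K} :
    φ ∈ (map (σ := σ) A.subtype).range ↔ ∀ n, coeff n φ ∈ A :=
  ⟨by rintro ⟨ψ, rfl⟩ n; simp [coeff_map], fun h => ⟨φ.toSubring A h, φ.map_toSubring A h⟩⟩

theorem inv_mem_range_map_subtype [Field K] {A : Subring K} {φ : MvPowerSeries σ K}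
    (hφ : φ ∈ (map (σ := σ) A.subtype).range) (hφ₀ : (constantCoeff φ)⁻¹ ∈ A) :
    φ⁻¹ ∈ (map (σ := σ) A.subtype).range := by
  by_cases h₀ : constantCoeff φ = 0
  · rw [inv_eq_zero.mpr h₀]
    exact zero_mem _
  obtain ⟨ψ, rfl⟩ := hφ
  rw [constantCoeff_map] at h₀ hφ₀
  have hψ : IsUnit ψ := isUnit_iff_constantCoeff.mpr <|
    isUnit_iff_exists_inv.mpr ⟨⟨_, hφ₀⟩, Subtype.ext (mul_inv_cancel₀ h₀)⟩
  obtain ⟨u, rfl⟩ := hψ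
  refine ⟨↑u⁻¹, ?_⟩
  rw [MvPowerSeries.eq_inv_iff_mul_eq_one (by rwa [constantCoeff_map]), ← map_mul,
    Units.inv_mul, map_one]

theorem coeff_mem_adjoin_div_inv {k : Type*} [Field k] [Field K] [Algebra k K]
    (e : K →+* MvPowerSeries σ K) (halg : ∀ c : k, e (algebraMap k K c) = C (algebraMap k K c))
    {s t : σ} {a b : K} (hb : b ≠ 0) (hea : e a = C a + X s) (heb : e b = C b + X t)
    {x : K} (hx : x ∈ Algebra.adjoin k {a / b, b⁻¹}) (n : σ →₀ ℕ) :
    coeff n (e x) ∈ Algebra.adjoin k {a / b, b⁻¹} := by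
  set A := Algebra.adjoin k {a / b, b⁻¹}
  set S := (map (σ := σ) A.toSubring.subtype).range
  suffices e x ∈ S from mem_range_map_subtype_iff.mp this n
  have hC : ∀ c ∈ A, C c ∈ S := fun c hc => ⟨C ⟨c, hc⟩, map_C _ _⟩
  have hX : ∀ u, X u ∈ S := fun u => ⟨X u, map_X _ u⟩
  have hab : a / b ∈ A := Algebra.subset_adjoin (by simp)
  have hbinv : b⁻¹ ∈ A := Algebra.subset_adjoin (by simp)
  set φ : MvPowerSeries σ K := 1 + C b⁻¹ * X t
  have hφ₀ : constantCoeff φ = 1 := by simp [φ]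
  have hφinv : φ⁻¹ ∈ S :=
    inv_mem_range_map_subtype (add_mem (one_mem _) (mul_mem (hC _ hbinv) (hX t)))
      (by rw [hφ₀, inv_one]; exact one_mem _)
  have hφ : φ = C b⁻¹ * e b := by rw [heb, mul_add, ← map_mul, inv_mul_cancel₀ hb, map_one]
  have heb_inv : e b⁻¹ = C b⁻¹ * φ⁻¹ := by
    rw [MvPowerSeries.eq_mul_inv_iff_mul_eq (by simp [hφ₀]), hφ, mul_left_comm, ← map_mul,
      inv_mul_cancel₀ hb, map_one, mul_one]
  refine e.apply_mem_of_mem_adjoin (fun c => halg c ▸ hC _ (A.algebraMap_mem c)) ?_ hx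
  rintro y (rfl | rfl)
  · have hea_div : e (a / b) = (C (a / b) + C b⁻¹ * X s) * φ⁻¹ := by
      rw [div_eq_mul_inv, map_mul, hea, heb_inv, map_mul]; ring
    rw [hea_div]
    exact mul_mem (add_mem (hC _ hab) (mul_mem (hC _ hbinv) (hX s))) hφinv
  · rw [heb_inv]
    exact mul_mem (hC _ hbinv) hφinv

end MvPowerSeries

/-- The canonical `𝔾ₐ²`-iterative HS-derivation on `k(X,Y)` (two-variable
Hasse derivatives), given by the coefficients of the map `e : k(X,Y) → k(X,Y)⟦U,V⟧`,
`X ↦ X + U`, `Y ↦ Y + V`, preserves the chart subrings `k[X/Y, 1/Y]` and `k[Y/X, 1/X]`. -/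
theorem hasse_derivatives_preserve_P2_charts
    (k : Type*) [Field k]
    (e : FractionRing (MvPolynomial (Fin 2) k) →+*
      MvPowerSeries (Fin 2) (FractionRing (MvPolynomial (Fin 2) k)))
    (he : ∀ q : MvPolynomial (Fin 2) k,
      e (algebraMap (MvPolynomial (Fin 2) k) (FractionRing (MvPolynomial (Fin 2) k)) q) =
        MvPolynomial.eval₂
          ((MvPowerSeries.C (σ := Fin 2) (R := FractionRing (MvPolynomial (Fin 2) k))).comp
            (algebraMap k (FractionRing (MvPolynomial (Fin 2) k))))
          (fun s => MvPowerSeries.C (σ := Fin 2) (R := FractionRing (MvPolynomial (Fin 2) k))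
              (algebraMap (MvPolynomial (Fin 2) k) (FractionRing (MvPolynomial (Fin 2) k))
                (MvPolynomial.X s)) +
            MvPowerSeries.X s) q)
    (D : ℕ → ℕ → FractionRing (MvPolynomial (Fin 2) k) →
      FractionRing (MvPolynomial (Fin 2) k))
    (hD : ∀ i j r, D i j r =
      MvPowerSeries.coeff (R := FractionRing (MvPolynomial (Fin 2) k))
        (Finsupp.single (0 : Fin 2) i + Finsupp.single (1 : Fin 2) j) (e r))
    (X Y : FractionRing (MvPolynomial (Fin 2) k))
    (hX : X = algebraMap (MvPolynomial (Fin 2) k) (FractionRing (MvPolynomial (Fin 2) k))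
      (MvPolynomial.X 0))
    (hY : Y = algebraMap (MvPolynomial (Fin 2) k) (FractionRing (MvPolynomial (Fin 2) k))
      (MvPolynomial.X 1)) :
    (∀ i j, ∀ x ∈ Algebra.adjoin k {X / Y, Y⁻¹}, D i j x ∈ Algebra.adjoin k {X / Y, Y⁻¹}) ∧
    (∀ i j, ∀ x ∈ Algebra.adjoin k {Y / X, X⁻¹}, D i j x ∈ Algebra.adjoin k {Y / X, X⁻¹}) := by
  set R := MvPolynomial (Fin 2) k
  set K := FractionRing R
  have heX : ∀ s : Fin 2, e (algebraMap R K (MvPolynomial.X s)) =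
      MvPowerSeries.C (algebraMap R K (MvPolynomial.X s)) + MvPowerSeries.X s := fun s => by
    rw [he, MvPolynomial.eval₂_X]
  have heAlg : ∀ c : k, e (algebraMap k K c) = MvPowerSeries.C (algebraMap k K c) := fun c => by
    rw [IsScalarTower.algebraMap_apply k R K, MvPolynomial.algebraMap_eq, he,
      MvPolynomial.eval₂_C, RingHom.comp_apply, ← MvPolynomial.algebraMap_eq,
      ← IsScalarTower.algebraMap_apply k R K]
  have hne : ∀ s : Fin 2, algebraMap R K (MvPolynomial.X s) ≠ 0 := fun s =>
    (map_ne_zero_iff _ (IsFractionRing.injective R K)).mpr (MvPolynomial.X_ne_zero s)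
  subst hX hY
  refine ⟨fun i j x hx => ?_, fun i j x hx => ?_⟩ <;> rw [hD]
  · exact MvPowerSeries.coeff_mem_adjoin_div_inv e heAlg (hne 1) (heX 0) (heX 1) hx _
  · exact MvPowerSeries.coeff_mem_adjoin_div_inv e heAlg (hne 0) (heX 1) (heX 0) hx _
end
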